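/- arXiv:1312.0476 — 5 statements merged into one kernel-verified Lean document; each statement's English description precedes it below -/
import Mathlib

section
/- Let p be an odd prime and let φ : H_p → A_p = H_p/Z(H_p) be the canonical projection. For every subgroup B of A_p of order p there exists a subgroup B̂ of H_p of order p such that φ restricted to B̂ is a group isomorphism onto B. -/
open Matrix

/-- The unitriangular matrix `M(a,b,c)`. -/
def Hmat (p : ℕ) (a b c : ZMod p) : Matrix (Fin 3) (Fin 3) (ZMod p) :=
  !![1, a, b; 0, 1, c; 0, 0, 1]

lemma Hmat_mul (p : ℕ) (a b c a' b' c' : ZMod p) :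
    Hmat p a b c * Hmat p a' b' c' = Hmat p (a + a') (b + b' + a * c') (c + c') := by
  simp only [Hmat, Matrix.mul_fin_three]
  congr 1 <;> ring

lemma Hmat_one (p : ℕ) : Hmat p 0 0 0 = 1 := by
  rw [Matrix.one_fin_three]; rfl

/-- `M(a,b,c)` as an element of `GL₃(𝔽_p)`. -/
def Hgl (p : ℕ) (a b c : ZMod p) : GL (Fin 3) (ZMod p) :=
  ⟨Hmat p a b c, Hmat p (-a) (a * c - b) (-c),
    by rw [Hmat_mul]; rw [show a + -a = 0 by ring, show b + (a*c-b) + a * -c = 0 by ring,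
      show c + -c = 0 by ring, Hmat_one],
    by rw [Hmat_mul]; rw [show -a + a = 0 by ring, show (a*c-b) + b + -a * c = 0 by ring,
      show -c + c = 0 by ring, Hmat_one]⟩

lemma Hgl_mul (p : ℕ) (a b c a' b' c' : ZMod p) :
    Hgl p a b c * Hgl p a' b' c' = Hgl p (a + a') (b + b' + a * c') (c + c') :=
  Units.ext (Hmat_mul p a b c a' b' c')

/-- The discrete Heisenberg group `H_p`: the subgroup of `GL₃(𝔽_p)` consisting of the
upper unitriangular matrices `M(a,b,c)`. -/
def Heisenberg (p : ℕ) : Subgroup (GL (Fin 3) (ZMod p)) where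
  carrier := { g | ∃ a b c : ZMod p, g = Hgl p a b c }
  one_mem' := ⟨0, 0, 0, Units.ext (Hmat_one p).symm⟩
  mul_mem' := by
    rintro g h ⟨a, b, c, rfl⟩ ⟨a', b', c', rfl⟩
    exact ⟨_, _, _, Hgl_mul p a b c a' b' c'⟩
  inv_mem' := by
    rintro g ⟨a, b, c, rfl⟩
    exact ⟨-a, a * c - b, -c, Units.ext rfl⟩

/-- The element `X = M(1,0,0)` of `H_p`. -/
def He.X (p : ℕ) : Heisenberg p := ⟨Hgl p 1 0 0, 1, 0, 0, rfl⟩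

/-- The element `Y = M(0,0,1)` of `H_p`. -/
def He.Y (p : ℕ) : Heisenberg p := ⟨Hgl p 0 0 1, 0, 0, 1, rfl⟩

/-- The element `Z = M(0,1,0)` of `H_p`. -/
def He.Z (p : ℕ) : Heisenberg p := ⟨Hgl p 0 1 0, 0, 1, 0, rfl⟩

/-
For odd `p` the group `H_p` has exponent `p`, since `M(a,b,c)^n = M(na, nb + C(n,2)ac, nc)` and
`p ∣ C(p,2)`. A subgroup `B` of order `p` is generated by any `b ≠ 1` in it; a preimage `g` of `b`
has order exactly `p` by the exponent bound, so `⟨g⟩` maps onto `⟨b⟩ = B`, and bijectively because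
both have `p` elements.
-/

theorem exists_injOn_lift_of_card_eq_prime {G Q : Type*} [Group G] [Group Q] {p : ℕ}
    [hp : Fact p.Prime] (hexp : ∀ g : G, g ^ p = 1) (f : G →* Q) (hf : Function.Surjective f)
    (B : Subgroup Q) (hB : Nat.card B = p) :
    ∃ Bhat : Subgroup G, Nat.card Bhat = p ∧ Bhat.map f = B ∧ Set.InjOn f (Bhat : Set G) := by
  have : Finite B := Nat.finite_of_card_ne_zero (hB ▸ hp.out.ne_zero)
  obtain ⟨b, hbB, hb1⟩ := B.bot_or_exists_ne_one.resolve_left fun h =>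
    hp.out.one_lt.ne' (by rw [← hB, h, Subgroup.card_bot])
  obtain ⟨g, rfl⟩ := hf b
  have hordb : orderOf (f g) = p := orderOf_eq_prime (by rw [← map_pow, hexp, map_one]) hb1
  have hordg : orderOf g = p := orderOf_eq_prime (hexp g) (by rintro rfl; exact hb1 (map_one f))
  have hmap : (Subgroup.zpowers g).map f = B := by
    rw [MonoidHom.map_zpowers]
    refine Subgroup.eq_of_le_of_card_ge (Subgroup.zpowers_le.mpr hbB) ?_
    rw [Nat.card_zpowers, hordb, hB]
  refine ⟨Subgroup.zpowers g, by rw [Nat.card_zpowers, hordg], hmap, ?_⟩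
  have : Finite (Subgroup.zpowers g) :=
    Nat.finite_of_card_ne_zero (by rw [Nat.card_zpowers, hordg]; exact hp.out.ne_zero)
  rw [← Set.ncard_image_iff, ← Subgroup.coe_map, hmap, ← Nat.card_coe_set_eq,
    ← Nat.card_coe_set_eq]
  simp only [SetLike.coe_sort_coe, Nat.card_zpowers, hordg, hB]

lemma Hgl_zero (p : ℕ) : Hgl p 0 0 0 = 1 := Units.ext (Hmat_one p)

lemma Hgl_pow (p : ℕ) (a b c : ZMod p) (n : ℕ) :
    Hgl p a b c ^ n = Hgl p (n * a) (n * b + n.choose 2 * (a * c)) (n * c) := by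
  induction n with
  | zero => simp [Hgl_zero]
  | succ n ih =>
    rw [pow_succ, ih, Hgl_mul, Nat.choose_succ_succ', Nat.choose_one_right]
    congr 1 <;> push_cast <;> ring

lemma Heisenberg.pow_eq_one {p : ℕ} (hp : p.Prime) (hodd : Odd p) (x : Heisenberg p) :
    x ^ p = 1 := by
  obtain ⟨_, a, b, c, rfl⟩ := x
  have hp2 : 2 < p := by
    obtain ⟨k, rfl⟩ := hodd
    have := hp.two_le
    omega
  have hchoose : ((p.choose 2 : ℕ) : ZMod p) = 0 :=
    (ZMod.natCast_eq_zero_iff _ _).mpr (hp.dvd_choose_self two_ne_zero hp2)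
  ext1
  simp [Hgl_pow, hchoose, Hgl_zero]

/-- Let `p` be an odd prime and `φ : H_p → A_p = H_p/Z(H_p)` the canonical
projection. For every subgroup `B` of `A_p` of order `p` there exists a subgroup `B̂` of `H_p`
of order `p` such that `φ` restricted to `B̂` is a group isomorphism onto `B`. -/
theorem Heisenberg_lift_of_order_p_subgroup (p : ℕ) (hp : p.Prime) (hodd : Odd p)
    (B : Subgroup ((Heisenberg p) ⧸ Subgroup.center (Heisenberg p)))
    (hB : Nat.card B = p) :
    ∃ Bhat : Subgroup (Heisenberg p),
      Nat.card Bhat = p ∧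
      Subgroup.map (QuotientGroup.mk' (Subgroup.center (Heisenberg p))) Bhat = B ∧
      Set.InjOn (QuotientGroup.mk' (Subgroup.center (Heisenberg p))) (Bhat : Set (Heisenberg p)) := by
  have : Fact p.Prime := ⟨hp⟩
  exact exists_injOn_lift_of_card_eq_prime (Heisenberg.pow_eq_one hp hodd) _
    (QuotientGroup.mk'_surjective _) B hB
end

section
/- Let p be an odd prime and let ρ : H_p → GL(V) be an irreducible complex representation of the discrete Heisenberg group H_p on a finite-dimensional complex vector space V with dim V > 1. Then dim V = p and ρ is faithful (injective). -/
open Matrix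

/-- A complex representation `ρ : G → GL(V)` is irreducible if `V` is nonzero and has no
`G`-invariant subspaces other than `0` and `V`. -/
def IsIrreducibleRep {G V : Type*} [Group G] [AddCommGroup V] [Module ℂ V]
    (ρ : Representation ℂ G V) : Prop :=
  Nontrivial V ∧ ∀ W : Submodule ℂ V, (∀ g : G, ∀ v ∈ W, ρ g v ∈ W) → W = ⊥ ∨ W = ⊤

open Module
open scoped commutatorElement

/-!
By Schur's lemma the central element `Z` acts by a scalar `ω` with `ω ^ p = 1`. If `ω = 1`,
the images of the generators `X`, `Y`, `Z` commute, so all of them are scalars and `V` is a line.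
Otherwise `ω` is a primitive `p`-th root of unity, and `X Y = Y X Z` makes `ρ Y` shift the
eigenvalues of `ρ X` by the factor `ω`: for an eigenvector `v` of `ρ X`, the vectors `Y^k v`,
`k < p`, are eigenvectors for the `p` distinct eigenvalues `ω^k μ`, and they span an invariant
subspace, hence a basis of `V`. A kernel element `M(a,b,c)` of `ρ` has its commutators with `Y`
and `X`, namely `Z^a` and `Z^c`, in the kernel, which forces `a = c = 0`, and then `b = 0`.
-/

section Schur

variable {G V : Type*} [Group G] [AddCommGroup V] [Module ℂ V] {ρ : Representation ℂ G V}

theorem IsIrreducibleRep.exists_eq_algebraMap_of_commute [FiniteDimensional ℂ V]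
    (hρ : IsIrreducibleRep ρ) {f : End ℂ V} (hf : ∀ g, Commute f (ρ g)) :
    ∃ c : ℂ, f = algebraMap ℂ (End ℂ V) c := by
  have := hρ.1
  obtain ⟨c, hc⟩ := f.exists_eigenvalue
  have htop : f.eigenspace c = ⊤ :=
    (hρ.2 _ fun g _ hv => f.mapsTo_genEigenspace_of_comm (hf g) c 1 hv).resolve_left hc
  refine ⟨c, LinearMap.ext fun v => ?_⟩
  rw [algebraMap_end_apply]
  exact End.mem_eigenspace_iff.mp (htop ▸ Submodule.mem_top)

theorem IsIrreducibleRep.finrank_eq_one_of_forall_mem_bot (hρ : IsIrreducibleRep ρ)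
    (h : ∀ g, ρ g ∈ (⊥ : Subalgebra ℂ (End ℂ V))) : finrank ℂ V = 1 := by
  have := hρ.1
  obtain ⟨v, hv⟩ := exists_ne (0 : V)
  have hline : ∀ g, ∀ u ∈ ℂ ∙ v, ρ g u ∈ ℂ ∙ v := fun g u hu => by
    obtain ⟨c, hc⟩ := Algebra.mem_bot.mp (h g)
    rw [← hc, algebraMap_end_apply]
    exact Submodule.smul_mem _ c hu
  rcases hρ.2 _ hline with hbot | htop
  · exact absurd (Submodule.span_singleton_eq_bot.mp hbot) hv
  · rw [← finrank_top ℂ V, ← htop, finrank_span_singleton hv]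

end Schur

theorem Module.End.apply_mem_eigenspace_of_mul_eq_smul {K V : Type*} [Field K] [AddCommGroup V]
    [Module K V] {f g : End K V} {c μ : K} (hfg : f * g = c • (g * f)) {v : V}
    (hv : v ∈ f.eigenspace μ) : g v ∈ f.eigenspace (c * μ) := by
  rw [End.mem_eigenspace_iff] at hv ⊢
  rw [← End.mul_apply, hfg, LinearMap.smul_apply, End.mul_apply, hv, map_smul,
    smul_smul]

namespace He

variable {p : ℕ}

def mk (a b c : ZMod p) : Heisenberg p := ⟨Hgl p a b c, a, b, c, rfl⟩

theorem mk_mul (a b c a' b' c' : ZMod p) :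
    mk a b c * mk a' b' c' = mk (a + a') (b + b' + a * c') (c + c') :=
  Subtype.ext (Hgl_mul p a b c a' b' c')

theorem mk_zero_zero_zero : (mk 0 0 0 : Heisenberg p) = 1 :=
  Subtype.ext (Units.ext (Hmat_one p))

theorem exists_eq_mk (g : Heisenberg p) : ∃ a b c, g = mk a b c := by
  obtain ⟨a, b, c, h⟩ := g.2
  exact ⟨a, b, c, Subtype.ext h⟩

theorem mk_inv (a b c : ZMod p) : (mk a b c)⁻¹ = mk (-a) (a * c - b) (-c) := by
  refine (eq_inv_of_mul_eq_one_left ?_).symm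
  rw [mk_mul, ← mk_zero_zero_zero]
  congr 1 <;> ring

theorem X_pow (n : ℕ) : X p ^ n = mk n 0 0 := by
  induction n with
  | zero => rw [pow_zero, Nat.cast_zero, mk_zero_zero_zero]
  | succ n ih =>
    rw [pow_succ, ih, X, ← mk, mk_mul]
    congr 1 <;> push_cast <;> ring

theorem Y_pow (n : ℕ) : Y p ^ n = mk 0 0 n := by
  induction n with
  | zero => rw [pow_zero, Nat.cast_zero, mk_zero_zero_zero]
  | succ n ih =>
    rw [pow_succ, ih, Y, ← mk, mk_mul]
    congr 1 <;> push_cast <;> ring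

theorem Z_pow (n : ℕ) : Z p ^ n = mk 0 n 0 := by
  induction n with
  | zero => rw [pow_zero, Nat.cast_zero, mk_zero_zero_zero]
  | succ n ih =>
    rw [pow_succ, ih, Z, ← mk, mk_mul]
    congr 1 <;> push_cast <;> ring

theorem Y_pow_card : Y p ^ p = 1 := by
  rw [Y_pow, ZMod.natCast_self, mk_zero_zero_zero]

theorem Z_pow_card : Z p ^ p = 1 := by
  rw [Z_pow, ZMod.natCast_self, mk_zero_zero_zero]

theorem commute_Z (g : Heisenberg p) : Commute (Z p) g := by
  obtain ⟨a, b, c, rfl⟩ := exists_eq_mk g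
  change mk 0 1 0 * mk a b c = mk a b c * mk 0 1 0
  rw [mk_mul, mk_mul]
  congr 1 <;> ring

theorem X_mul_Y : X p * Y p = Y p * X p * Z p := by
  change mk 1 0 0 * mk 0 0 1 = mk 0 0 1 * mk 1 0 0 * mk 0 1 0
  simp only [mk_mul]
  congr 1 <;> ring

theorem commutatorElement_mk_Y (a b c : ZMod p) : ⁅mk a b c, Y p⁆ = mk 0 a 0 := by
  change mk a b c * mk 0 0 1 * (mk a b c)⁻¹ * (mk 0 0 1)⁻¹ = _
  simp only [mk_inv, mk_mul]
  congr 1 <;> ring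

theorem commutatorElement_X_mk (a b c : ZMod p) : ⁅X p, mk a b c⁆ = mk 0 c 0 := by
  change mk 1 0 0 * mk a b c * (mk 1 0 0)⁻¹ * (mk a b c)⁻¹ = _
  simp only [mk_inv, mk_mul]
  congr 1 <;> ring

section

variable [NeZero p]

theorem Z_pow_val (b : ZMod p) : Z p ^ b.val = mk 0 b 0 := by
  rw [Z_pow, ZMod.natCast_zmod_val]

theorem mk_eq_Y_pow_mul_X_pow_mul_Z_pow (a b c : ZMod p) :
    mk a b c = Y p ^ c.val * X p ^ a.val * Z p ^ b.val := by
  simp only [X_pow, Y_pow, Z_pow, ZMod.natCast_zmod_val, mk_mul]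
  congr 1 <;> ring

theorem closure_X_Y_Z : Submonoid.closure {X p, Y p, Z p} = ⊤ := by
  refine eq_top_iff.mpr fun g _ => ?_
  obtain ⟨a, b, c, rfl⟩ := exists_eq_mk g
  rw [mk_eq_Y_pow_mul_X_pow_mul_Z_pow]
  refine mul_mem (mul_mem ?_ ?_) ?_ <;> refine pow_mem (Submonoid.subset_closure ?_) _ <;> simp

theorem induction_on {P : Heisenberg p → Prop} (one : P 1)
    (mul : ∀ g h, P g → P h → P (g * h)) (hX : P (X p)) (hY : P (Y p)) (hZ : P (Z p))
    (g : Heisenberg p) : P g := by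
  have hg : g ∈ Submonoid.closure {X p, Y p, Z p} :=
    closure_X_Y_Z (p := p) ▸ Submonoid.mem_top g
  induction hg using Submonoid.closure_induction with
  | mem g hg => rcases hg with rfl | rfl | rfl <;> assumption
  | one => exact one
  | mul g h _ _ hg hh => exact mul g h hg hh

end

variable {V : Type*} [AddCommGroup V] [Module ℂ V] {ρ : Representation ℂ (Heisenberg p) V}
  {ω : ℂ}

theorem rho_X_mul_rho_Y (hω : ρ (Z p) = algebraMap ℂ (End ℂ V) ω) :
    ρ (X p) * ρ (Y p) = ω • (ρ (Y p) * ρ (X p)) := by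
  rw [← map_mul, X_mul_Y, map_mul, map_mul, hω, Algebra.algebraMap_eq_smul_one, mul_smul_comm,
    mul_one]

theorem exists_rho_Z_eq_algebraMap [FiniteDimensional ℂ V] (hρ : IsIrreducibleRep ρ) :
    ∃ ω : ℂ, ρ (Z p) = algebraMap ℂ (End ℂ V) ω :=
  hρ.exists_eq_algebraMap_of_commute fun g => (commute_Z g).map ρ

theorem rho_Y_pow_apply_mem_eigenspace (hω : ρ (Z p) = algebraMap ℂ (End ℂ V) ω)
    {μ : ℂ} {v : V} (hv : v ∈ End.eigenspace (ρ (X p)) μ) (k : ℕ) :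
    ρ (Y p ^ k) v ∈ End.eigenspace (ρ (X p)) (ω ^ k * μ) := by
  induction k with
  | zero => simpa using hv
  | succ k ih =>
    rw [pow_succ' (Y p), map_mul, End.mul_apply, pow_succ', mul_assoc]
    exact End.apply_mem_eigenspace_of_mul_eq_smul (rho_X_mul_rho_Y hω) ih

theorem linearIndependent_rho_Y_pow_apply (hω : ρ (Z p) = algebraMap ℂ (End ℂ V) ω)
    (hprim : IsPrimitiveRoot ω p) {μ : ℂ} {v : V} (hv : End.HasEigenvector (ρ (X p)) μ v) :
    LinearIndependent ℂ fun k : Fin p => ρ (Y p ^ (k : ℕ)) v := by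
  have hμ : μ ≠ 0 := by
    rintro rfl
    refine hv.2 ((ρ.apply_bijective (X p)).injective ?_)
    rw [map_zero, ← zero_smul ℂ v]
    exact End.mem_eigenspace_iff.mp hv.1
  refine End.eigenvectors_linearIndependent' (ρ (X p)) (fun k : Fin p => ω ^ (k : ℕ) * μ)
    (fun i j hij => Fin.ext (hprim.pow_inj i.2 j.2 (mul_right_cancel₀ hμ hij))) _
    fun k => ⟨rho_Y_pow_apply_mem_eigenspace hω hv.1 k, ?_⟩
  rw [Ne, ← map_zero (ρ (Y p ^ (k : ℕ)))]
  exact fun h => hv.2 ((ρ.apply_bijective _).injective h)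

variable [NeZero p]

theorem forall_invariant_of_X_Y_Z {W : Submodule ℂ V} (hX : ∀ v ∈ W, ρ (X p) v ∈ W)
    (hY : ∀ v ∈ W, ρ (Y p) v ∈ W) (hZ : ∀ v ∈ W, ρ (Z p) v ∈ W) :
    ∀ g, ∀ v ∈ W, ρ g v ∈ W :=
  induction_on (by simp) (fun g h hg hh v hv => by simpa using hg _ (hh v hv)) hX hY hZ

theorem forall_commute_of_X_Y_Z {f : End ℂ V} (hX : Commute f (ρ (X p)))
    (hY : Commute f (ρ (Y p))) (hZ : Commute f (ρ (Z p))) : ∀ g, Commute f (ρ g) :=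
  induction_on (by simp) (fun g h hg hh => by simpa using hg.mul_right hh) hX hY hZ

theorem forall_mem_of_X_Y_Z {A : Subalgebra ℂ (End ℂ V)} (hX : ρ (X p) ∈ A)
    (hY : ρ (Y p) ∈ A) (hZ : ρ (Z p) ∈ A) : ∀ g, ρ g ∈ A :=
  induction_on (by simp) (fun g h hg hh => by simpa using A.mul_mem hg hh)
    hX hY hZ

theorem finrank_eq_one_of_rho_Z_eq_one [FiniteDimensional ℂ V] (hρ : IsIrreducibleRep ρ)
    (hZ : ρ (Z p) = 1) : finrank ℂ V = 1 := by
  have hZ_comm (f : End ℂ V) : Commute f (ρ (Z p)) := hZ ▸ Commute.one_right f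
  have hXY : Commute (ρ (X p)) (ρ (Y p)) := by
    simpa [Commute, SemiconjBy] using rho_X_mul_rho_Y (ρ := ρ) (ω := 1) (by rw [hZ, map_one])
  obtain ⟨a, ha⟩ := hρ.exists_eq_algebraMap_of_commute
    (forall_commute_of_X_Y_Z (Commute.refl _) hXY (hZ_comm _))
  obtain ⟨b, hb⟩ := hρ.exists_eq_algebraMap_of_commute
    (forall_commute_of_X_Y_Z hXY.symm (Commute.refl _) (hZ_comm _))
  refine hρ.finrank_eq_one_of_forall_mem_bot (forall_mem_of_X_Y_Z ?_ ?_ ?_)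
  · exact ha ▸ Subalgebra.algebraMap_mem _ a
  · exact hb ▸ Subalgebra.algebraMap_mem _ b
  · exact hZ ▸ Subalgebra.one_mem _

theorem isPrimitiveRoot_of_rho_Z_eq [Fact p.Prime] [FiniteDimensional ℂ V]
    (hρ : IsIrreducibleRep ρ) (hdim : finrank ℂ V ≠ 1)
    (hω : ρ (Z p) = algebraMap ℂ (End ℂ V) ω) :
    IsPrimitiveRoot ω p := by
  have := hρ.1
  have hpow : ω ^ p = 1 := (algebraMap ℂ (End ℂ V)).injective <| by
    rw [map_pow, ← hω, ← map_pow, Z_pow_card, map_one, map_one]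
  have hne : ω ≠ 1 := fun h =>
    hdim (finrank_eq_one_of_rho_Z_eq_one hρ (by rw [hω, h, map_one]))
  exact orderOf_eq_prime hpow hne ▸ IsPrimitiveRoot.orderOf ω

theorem span_rho_Y_pow_apply_eq_top (hρ : IsIrreducibleRep ρ)
    (hω : ρ (Z p) = algebraMap ℂ (End ℂ V) ω) {μ : ℂ} {v : V}
    (hv : End.HasEigenvector (ρ (X p)) μ v) :
    Submodule.span ℂ (Set.range fun k : Fin p => ρ (Y p ^ (k : ℕ)) v) = ⊤ := by
  set W := Submodule.span ℂ (Set.range fun k : Fin p => ρ (Y p ^ (k : ℕ)) v)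
  have hmem (n : ℕ) : ρ (Y p ^ n) v ∈ W := by
    rw [pow_eq_pow_mod n Y_pow_card]
    exact Submodule.subset_span ⟨⟨n % p, Nat.mod_lt n (NeZero.pos p)⟩, rfl⟩
  have hinv {f : End ℂ V} (hf : ∀ k : ℕ, f (ρ (Y p ^ k) v) ∈ W) : ∀ u ∈ W, f u ∈ W :=
    fun u hu => Submodule.span_le (p := W.comap f) |>.mpr
      (Set.range_subset_iff.mpr fun k : Fin p => hf k) hu
  refine (hρ.2 W (forall_invariant_of_X_Y_Z ?_ ?_ ?_)).resolve_left fun hbot => hv.2 ?_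
  · refine hinv fun k => ?_
    rw [End.mem_eigenspace_iff.mp (rho_Y_pow_apply_mem_eigenspace hω hv.1 k)]
    exact W.smul_mem _ (hmem k)
  · refine hinv fun k => ?_
    rw [← End.mul_apply, ← map_mul, ← pow_succ']
    exact hmem (k + 1)
  · refine hinv fun k => ?_
    rw [hω, algebraMap_end_apply]
    exact W.smul_mem _ (hmem k)
  · simpa [hbot] using hmem 0

theorem finrank_eq_of_isPrimitiveRoot [FiniteDimensional ℂ V] (hρ : IsIrreducibleRep ρ)
    (hω : ρ (Z p) = algebraMap ℂ (End ℂ V) ω) (hprim : IsPrimitiveRoot ω p) :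
    finrank ℂ V = p := by
  have := hρ.1
  obtain ⟨μ, hμ⟩ := End.exists_eigenvalue (ρ (X p))
  obtain ⟨v, hv⟩ := hμ.exists_hasEigenvector
  have basis := Basis.mk (linearIndependent_rho_Y_pow_apply hω hprim hv)
    (span_rho_Y_pow_apply_eq_top hρ hω hv).ge
  rw [finrank_eq_card_basis basis, Fintype.card_fin]

theorem eq_zero_of_rho_mk_eq_one [Nontrivial V] (hω : ρ (Z p) = algebraMap ℂ (End ℂ V) ω)
    (hprim : IsPrimitiveRoot ω p) {b : ZMod p} (h : ρ (mk 0 b 0) = 1) : b = 0 := by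
  have hpow : ω ^ b.val = 1 := (algebraMap ℂ (End ℂ V)).injective <| by
    rw [map_pow, ← hω, ← map_pow, Z_pow_val, h, map_one]
  exact (ZMod.val_eq_zero b).mp
    (Nat.eq_zero_of_dvd_of_lt ((hprim.pow_eq_one_iff_dvd _).mp hpow) (ZMod.val_lt b))

theorem injective_of_isPrimitiveRoot [Nontrivial V] (hω : ρ (Z p) = algebraMap ℂ (End ℂ V) ω)
    (hprim : IsPrimitiveRoot ω p) : Function.Injective ρ := by
  refine (injective_iff_map_eq_one ρ).mpr fun g hg => ?_
  obtain ⟨a, b, c, rfl⟩ := exists_eq_mk g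
  have hker : ρ.asGroupHom (mk a b c) = 1 := Units.ext (by rwa [ρ.asGroupHom_apply])
  have hone {x} (hx : ρ.asGroupHom x = 1) : ρ x = 1 := by
    rw [← ρ.asGroupHom_apply, hx, Units.val_one]
  have ha : a = 0 := eq_zero_of_rho_mk_eq_one hω hprim <| hone <| by
    rw [← commutatorElement_mk_Y a b c, map_commutatorElement, hker, commutatorElement_one_left]
  have hc : c = 0 := eq_zero_of_rho_mk_eq_one hω hprim <| hone <| by
    rw [← commutatorElement_X_mk a b c, map_commutatorElement, hker, commutatorElement_one_right]
  subst ha hc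
  rw [eq_zero_of_rho_mk_eq_one hω hprim hg, mk_zero_zero_zero]

end He

theorem Heisenberg_irreducible_rep_dim_and_faithful_general (p : ℕ) (hp : p.Prime)
    (V : Type) [AddCommGroup V] [Module ℂ V] [FiniteDimensional ℂ V]
    (ρ : Representation ℂ (Heisenberg p) V)
    (hirr : IsIrreducibleRep ρ) (hdim : 1 < Module.finrank ℂ V) :
    Module.finrank ℂ V = p ∧ Function.Injective ρ := by
  have : Fact p.Prime := ⟨hp⟩
  have := hirr.1
  obtain ⟨ω, hω⟩ := He.exists_rho_Z_eq_algebraMap hirr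
  have hprim := He.isPrimitiveRoot_of_rho_Z_eq hirr hdim.ne' hω
  exact ⟨He.finrank_eq_of_isPrimitiveRoot hirr hω hprim,
    He.injective_of_isPrimitiveRoot hω hprim⟩

/-- For an odd prime `p`, every irreducible complex representation of `H_p`
of dimension `> 1` is `p`-dimensional and faithful. -/
theorem Heisenberg_irreducible_rep_dim_and_faithful (p : ℕ) (hp : p.Prime) (hodd : Odd p)
    (V : Type) [AddCommGroup V] [Module ℂ V] [FiniteDimensional ℂ V]
    (ρ : Representation ℂ (Heisenberg p) V)
    (hirr : IsIrreducibleRep ρ) (hdim : 1 < Module.finrank ℂ V) :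
    Module.finrank ℂ V = p ∧ Function.Injective ρ :=
  Heisenberg_irreducible_rep_dim_and_faithful_general p hp V ρ hirr hdim
end

section
/- Let p be an odd prime, let ρ : H_p → GL(V) be a faithful irreducible complex representation of the discrete Heisenberg group H_p on a p-dimensional complex vector space V, and let φ : H_p → A_p = H_p/Z(H_p) be the canonical projection. If B and B′ are two distinct subgroups of A_p of order p, then there is no nonzero vector v ∈ V such that the image φ(S_v) (where S_v = { g ∈ H_p : ρ(g)v ∈ ℂ·v }) contains both B and B′; equivalently, the sets of lines in V fixed by (lifts of) B and by (lifts of) B′ are disjoint. -/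
open Matrix

-- entry extraction
lemma Hgl_val01 (p : ℕ) (a b c : ZMod p) : (Hgl p a b c : Matrix (Fin 3) (Fin 3) (ZMod p)) 0 1 = a := by
  simp [Hgl, Hmat]
lemma Hgl_val12 (p : ℕ) (a b c : ZMod p) : (Hgl p a b c : Matrix (Fin 3) (Fin 3) (ZMod p)) 1 2 = c := by
  simp [Hgl, Hmat]
lemma Hgl_val02 (p : ℕ) (a b c : ZMod p) : (Hgl p a b c : Matrix (Fin 3) (Fin 3) (ZMod p)) 0 2 = b := by
  simp [Hgl, Hmat]

lemma Hgl_inj (p : ℕ) {a b c a' b' c' : ZMod p} (h : Hgl p a b c = Hgl p a' b' c') :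
    a = a' ∧ b = b' ∧ c = c' := by
  refine ⟨?_, ?_, ?_⟩
  · rw [← Hgl_val01 p a b c, h, Hgl_val01]
  · rw [← Hgl_val02 p a b c, h, Hgl_val02]
  · rw [← Hgl_val12 p a b c, h, Hgl_val12]

/-- The projection to the abelianization coordinates. -/
def Hf (p : ℕ) : Heisenberg p →* Multiplicative (ZMod p × ZMod p) where
  toFun g := Multiplicative.ofAdd ((g.val : Matrix (Fin 3) (Fin 3) (ZMod p)) 0 1,
              (g.val : Matrix (Fin 3) (Fin 3) (ZMod p)) 1 2)
  map_one' := by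
    have h1 : ((((1 : Heisenberg p) : GL (Fin 3) (ZMod p)) : Matrix (Fin 3) (Fin 3) (ZMod p))) 0 1
        = 0 := by
      rw [OneMemClass.coe_one, Units.val_one, Matrix.one_apply_ne (by decide)]
    have h2 : ((((1 : Heisenberg p) : GL (Fin 3) (ZMod p)) : Matrix (Fin 3) (Fin 3) (ZMod p))) 1 2
        = 0 := by
      rw [OneMemClass.coe_one, Units.val_one, Matrix.one_apply_ne (by decide)]
    show Multiplicative.ofAdd (_, _) = _
    rw [h1, h2]; rfl
  map_mul' := by
    rintro ⟨g, a, b, c, rfl⟩ ⟨h, a', b', c', rfl⟩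
    have hm : (Hgl p a b c) * (Hgl p a' b' c') = Hgl p (a+a') (b+b'+a*c') (c+c') := Hgl_mul ..
    show Multiplicative.ofAdd (_, _) = Multiplicative.ofAdd (_, _) * Multiplicative.ofAdd (_, _)
    rw [← ofAdd_add]
    simp only [Subgroup.coe_mul, hm, Hgl_val01, Hgl_val12]
    rfl

lemma Hf_ker (p : ℕ) : (Hf p).ker = Subgroup.center (Heisenberg p) := by
  ext g
  obtain ⟨g, a, b, c, rfl⟩ := g
  constructor
  · intro hg
    rw [MonoidHom.mem_ker] at hg
    have hval : Multiplicative.ofAdd ((a, c) : ZMod p × ZMod p) = 1 := by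
      rw [← hg]; show Multiplicative.ofAdd ((a,c) : ZMod p × ZMod p) = Multiplicative.ofAdd (_, _)
      rw [Hgl_val01, Hgl_val12]
    have ha : a = 0 := congrArg (fun x => (Multiplicative.toAdd x).1) hval
    have hc : c = 0 := congrArg (fun x => (Multiplicative.toAdd x).2) hval
    subst ha; subst hc
    rw [Subgroup.mem_center_iff]
    rintro ⟨h, a', b', c', rfl⟩
    ext : 1
    show Hgl p a' b' c' * Hgl p 0 b 0 = Hgl p 0 b 0 * Hgl p a' b' c'
    rw [Hgl_mul, Hgl_mul]
    rw [show a' + 0 = 0 + a' by ring, show b' + b + a' * 0 = b + b' + 0 * c' by ring,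
      show c' + 0 = 0 + c' by ring]
  · intro hg
    rw [Subgroup.mem_center_iff] at hg
    have h1 := hg ⟨Hgl p 1 0 0, 1, 0, 0, rfl⟩
    have h2 := hg ⟨Hgl p 0 0 1, 0, 0, 1, rfl⟩
    have e1 : Hgl p 1 0 0 * Hgl p a b c = Hgl p a b c * Hgl p 1 0 0 := congrArg Subtype.val h1
    have e2 : Hgl p 0 0 1 * Hgl p a b c = Hgl p a b c * Hgl p 0 0 1 := congrArg Subtype.val h2
    rw [Hgl_mul, Hgl_mul] at e1 e2
    have ec := (Hgl_inj p e1).2.1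
    have ea := (Hgl_inj p e2).2.1
    have hc : c = 0 := by
      have : 0 + b + 1 * c = b + 0 + a * 0 := ec
      linear_combination this
    have ha : a = 0 := by
      have : 0 + b + 0 * c = b + 0 + a * 1 := ea
      linear_combination -this
    show Multiplicative.ofAdd (_, _) = 1
    rw [Hgl_val01, Hgl_val12, ha, hc]; rfl

lemma Hf_surj (p : ℕ) : Function.Surjective (Hf p) := by
  intro x
  refine ⟨⟨Hgl p (Multiplicative.toAdd x).1 0 (Multiplicative.toAdd x).2,
    ⟨(Multiplicative.toAdd x).1, 0, (Multiplicative.toAdd x).2, rfl⟩⟩, ?_⟩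
  show Multiplicative.ofAdd (_, _) = x
  rw [Hgl_val01, Hgl_val12]
  rfl

lemma card_Ap (p : ℕ) [NeZero p] :
    Nat.card (Heisenberg p ⧸ Subgroup.center (Heisenberg p)) = p * p := by
  rw [← Hf_ker]
  rw [Nat.card_congr (QuotientGroup.quotientKerEquivOfSurjective (Hf p) (Hf_surj p)).toEquiv]
  simp [Nat.card_eq_fintype_card]



lemma schur_center {G V : Type*} [Group G] [AddCommGroup V] [Module ℂ V] [FiniteDimensional ℂ V]
    (ρ : Representation ℂ G V) (hirr : IsIrreducibleRep ρ)
    {z : G} (hz : z ∈ Subgroup.center G) (v : V) : ρ z v ∈ Submodule.span ℂ {v} := by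
  haveI : Nontrivial V := hirr.1
  obtain ⟨μ, hμ⟩ := Module.End.exists_eigenvalue (ρ z)
  have hinv : ∀ g : G, ∀ w ∈ Module.End.eigenspace (ρ z) μ,
      ρ g w ∈ Module.End.eigenspace (ρ z) μ := by
    intro g w hw
    rw [Module.End.mem_eigenspace_iff] at hw ⊢
    calc ρ z (ρ g w) = ρ (z * g) w := by rw [_root_.map_mul]; rfl
    _ = ρ (g * z) w := by rw [Subgroup.mem_center_iff.mp hz g]
    _ = ρ g (ρ z w) := by rw [_root_.map_mul]; rfl
    _ = μ • ρ g w := by rw [hw, _root_.map_smul]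
  rcases hirr.2 _ hinv with h | h
  · exact absurd h hμ
  · have hv : v ∈ Module.End.eigenspace (ρ z) μ := h ▸ Submodule.mem_top
    rw [Module.End.mem_eigenspace_iff] at hv
    rw [hv]
    exact Submodule.smul_mem _ _ (Submodule.mem_span_singleton_self v)

/-- The stabilizer of the line spanned by a nonzero vector. -/
def lineStab {G V : Type*} [Group G] [AddCommGroup V] [Module ℂ V]
    (ρ : Representation ℂ G V) (v : V) (hv : v ≠ 0) : Subgroup G where
  carrier := {g | ρ g v ∈ Submodule.span ℂ {v}}
  one_mem' := by simpa using Submodule.mem_span_singleton_self v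
  mul_mem' := by
    intro g h hg hh
    obtain ⟨c, hc⟩ := Submodule.mem_span_singleton.mp hh
    show ρ (g * h) v ∈ Submodule.span ℂ {v}
    rw [_root_.map_mul, Module.End.mul_apply, ← hc, _root_.map_smul]
    exact Submodule.smul_mem _ _ hg
  inv_mem' := by
    intro g hg
    obtain ⟨c, hc⟩ := Submodule.mem_span_singleton.mp hg
    have hrec : ρ g⁻¹ (ρ g v) = v := by
      rw [← Module.End.mul_apply, ← _root_.map_mul, inv_mul_cancel, _root_.map_one]; rfl
    have hc0 : c ≠ 0 := by
      rintro rfl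
      rw [zero_smul] at hc
      exact hv (by rw [← hrec, ← hc, map_zero])
    have h1 : c • ρ g⁻¹ v = v := by rw [← _root_.map_smul, hc, hrec]
    show ρ g⁻¹ v ∈ Submodule.span ℂ {v}
    refine Submodule.mem_span_singleton.mpr ⟨c⁻¹, ?_⟩
    calc c⁻¹ • v = c⁻¹ • (c • ρ g⁻¹ v) := by rw [h1]
    _ = ρ g⁻¹ v := by rw [smul_smul, inv_mul_cancel₀ hc0, one_smul]


/-- For an odd prime `p`, a faithful irreducible `p`-dimensional complex
representation `ρ` of `H_p` and two distinct subgroups `B ≠ B'` of `A_p = H_p/Z(H_p)` of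
order `p`, there is no nonzero `v ∈ V` whose projective stabilizer image
`φ(S_v)` (with `S_v = {g : ρ(g)v ∈ ℂ·v}`) contains both `B` and `B'`. -/
theorem Heisenberg_fixed_lines_disjoint (p : ℕ) (hp : p.Prime) (hodd : Odd p)
    (V : Type) [AddCommGroup V] [Module ℂ V] [FiniteDimensional ℂ V]
    (ρ : Representation ℂ (Heisenberg p) V)
    (hirr : IsIrreducibleRep ρ) (hfaith : Function.Injective ρ)
    (hdim : Module.finrank ℂ V = p)
    (B B' : Subgroup ((Heisenberg p) ⧸ Subgroup.center (Heisenberg p)))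
    (hB : Nat.card B = p) (hB' : Nat.card B' = p) (hne : B ≠ B') :
    ¬ ∃ v : V, v ≠ 0 ∧
      (B : Set _) ⊆ (QuotientGroup.mk' (Subgroup.center (Heisenberg p))) ''
        {g : Heisenberg p | ρ g v ∈ Submodule.span ℂ {v}} ∧
      (B' : Set _) ⊆ (QuotientGroup.mk' (Subgroup.center (Heisenberg p))) ''
        {g : Heisenberg p | ρ g v ∈ Submodule.span ℂ {v}} := by
  rintro ⟨v, hv, hBsub, hB'sub⟩
  haveI : NeZero p := ⟨hp.ne_zero⟩
  haveI : Finite (Heisenberg p) := Subtype.finite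
  have hφ : True := trivial
  let φ := QuotientGroup.mk' (Subgroup.center (Heisenberg p))
  let Sv := lineStab ρ v hv
  -- B, B' ≤ Sv.map φ
  have hBle : B ≤ Sv.map φ := by
    intro x hx
    obtain ⟨g, hg, hgx⟩ := hBsub hx
    exact ⟨g, show g ∈ lineStab ρ v hv from hg, hgx⟩
  have hB'le : B' ≤ Sv.map φ := by
    intro x hx
    obtain ⟨g, hg, hgx⟩ := hB'sub hx
    exact ⟨g, show g ∈ lineStab ρ v hv from hg, hgx⟩
  -- B ⊔ B' = ⊤
  have hcard : Nat.card ((Heisenberg p) ⧸ Subgroup.center (Heisenberg p)) = p ^ 2 := by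
    rw [card_Ap p, sq]
  have hdvd : Nat.card (B ⊔ B' : Subgroup _) ∣ p ^ 2 :=
    hcard ▸ Subgroup.card_subgroup_dvd_card _
  have hpdvd : p ∣ Nat.card (B ⊔ B' : Subgroup _) := by
    have h := Subgroup.card_dvd_of_le (le_sup_left : B ≤ B ⊔ B')
    rwa [hB] at h
  have hnep : Nat.card (B ⊔ B' : Subgroup _) ≠ p := by
    intro h
    have h1 : B = B ⊔ B' := Subgroup.eq_of_le_of_card_ge le_sup_left (by rw [h, hB])
    have h2 : B' = B ⊔ B' := Subgroup.eq_of_le_of_card_ge le_sup_right (by rw [h, hB'])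
    exact hne (h1.trans h2.symm)
  obtain ⟨k, hk2, hkeq⟩ := (Nat.dvd_prime_pow hp).mp hdvd
  interval_cases k
  · rw [pow_zero] at hkeq
    rw [hkeq] at hpdvd
    exact hp.one_lt.ne' (Nat.dvd_one.mp hpdvd)
  · exact hnep (by rw [hkeq, pow_one])
  · have hsup : B ⊔ B' = ⊤ := Subgroup.eq_top_of_card_eq _ (by rw [hkeq, hcard])
    -- Sv.map φ = ⊤
    have hmap : Sv.map φ = ⊤ := top_le_iff.mp (hsup ▸ sup_le hBle hB'le)
    -- center ≤ Sv
    have hcen : Subgroup.center (Heisenberg p) ≤ Sv := fun z hz =>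
      schur_center ρ hirr hz v
    have hSvtop : Sv = ⊤ := by
      have h1 : Sv ⊔ Subgroup.center (Heisenberg p) = ⊤ := by
        rw [← QuotientGroup.ker_mk' (Subgroup.center (Heisenberg p)),
          ← Subgroup.comap_map_eq, hmap, Subgroup.comap_top]
      rwa [sup_of_le_left hcen] at h1
    -- span{v} is invariant hence ⊤, contradiction with dim
    have hinv : ∀ g : Heisenberg p, ∀ w ∈ Submodule.span ℂ ({v} : Set V),
        ρ g w ∈ Submodule.span ℂ ({v} : Set V) := by
      intro g w hw
      obtain ⟨c, hc⟩ := Submodule.mem_span_singleton.mp hw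
      have hg : g ∈ Sv := hSvtop ▸ Subgroup.mem_top g
      rw [← hc, _root_.map_smul]
      exact Submodule.smul_mem _ _ hg
    rcases hirr.2 _ hinv with h | h
    · exact hv (by
        simpa using (show v ∈ (⊥ : Submodule ℂ V) from h ▸ Submodule.mem_span_singleton_self v))
    · have : (1 : ℕ) = p := by
        rw [← finrank_span_singleton (K := ℂ) hv, h, finrank_top, hdim]
      exact hp.one_lt.ne' this.symm
end

section
/- Let p be an odd prime, let ρ : H_p → GL(V) be a faithful irreducible complex representation of the discrete Heisenberg group H_p on a p-dimensional complex vector space V, and let φ : H_p → A_p = H_p/Z(H_p) be the canonical projection. Let g ∈ H_p be noncentral, so that ρ(g) has exactly p one-dimensional eigenspaces, and let h ∈ H_p be an element whose image φ(h) does not lie in the subgroup of A_p generated by φ(g). Then ρ(h) maps each eigenspace of ρ(g) onto an eigenspace of ρ(g), and the induced permutation of the p eigenlines of ρ(g) is a single cycle of length p (in particular it has no fixed eigenline); that is, the quotient A_p/⟨φ(g)⟩ acts simply transitively on the set of eigenlines of ρ(g). -/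
open Matrix

-- AUX
def HgS (p : ℕ) (a b c : ZMod p) : Heisenberg p := ⟨Hgl p a b c, a, b, c, rfl⟩

lemma HgS_congr (p : ℕ) {a b c a' b' c' : ZMod p} (h1 : a = a') (h2 : b = b') (h3 : c = c') :
    HgS p a b c = HgS p a' b' c' := by subst h1; subst h2; subst h3; rfl

lemma HgS_mul (p : ℕ) (a b c a' b' c' : ZMod p) :
    HgS p a b c * HgS p a' b' c' = HgS p (a + a') (b + b' + a * c') (c + c') :=
  Subtype.ext (Hgl_mul p a b c a' b' c')

lemma HgS_one (p : ℕ) : HgS p 0 0 0 = 1 :=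
  Subtype.ext (Units.ext (Hmat_one p))

lemma HgS_inv (p : ℕ) (a b c : ZMod p) :
    (HgS p a b c)⁻¹ = HgS p (-a) (a * c - b) (-c) :=
  Subtype.ext (Units.ext rfl)

lemma HgS_pow (p : ℕ) (a b c : ZMod p) (n : ℕ) :
    (HgS p a b c) ^ n = HgS p (n * a) (n * b + (n.choose 2 : ℕ) * (a * c)) (n * c) := by
  induction n with
  | zero => rw [pow_zero]; rw [← HgS_one p]
            exact HgS_congr p (by push_cast; ring) (by simp) (by push_cast; ring)
  | succ n ih =>
      rw [pow_succ, ih, HgS_mul]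
      refine HgS_congr p (by push_cast; ring) ?_ (by push_cast; ring)
      have : (n+1).choose 2 = n.choose 1 + n.choose 2 := Nat.choose_succ_succ n 1
      rw [this, Nat.choose_one_right]
      push_cast; ring

lemma Heis_eq (p : ℕ) (x : Heisenberg p) : ∃ a b c : ZMod p, x = HgS p a b c := by
  obtain ⟨a, b, c, hx⟩ := x.2
  exact ⟨a, b, c, Subtype.ext hx⟩

lemma HgS_central (p : ℕ) (b : ZMod p) : HgS p 0 b 0 ∈ Subgroup.center (Heisenberg p) := by
  rw [Subgroup.mem_center_iff]
  intro x
  obtain ⟨a', b', c', rfl⟩ := Heis_eq p x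
  rw [HgS_mul, HgS_mul]
  exact HgS_congr p (by ring) (by ring) (by ring)

lemma map_eigenspace_of_comm {V : Type} [AddCommGroup V] [Module ℂ V]
    (A B Bi : Module.End ℂ V) (hBi : ∀ v, Bi (B v) = v) (hBi' : ∀ v, B (Bi v) = v)
    (ε : ℂ) (hε : ε ≠ 0) (rel : ∀ v, A (B v) = ε • B (A v)) (μ : ℂ) :
    Submodule.map B (Module.End.eigenspace A μ) = Module.End.eigenspace A (ε * μ) := by
  have relinv : ∀ v, A (Bi v) = ε⁻¹ • Bi (A v) := by
    intro v
    have h1 : A v = ε • B (A (Bi v)) := by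
      conv_lhs => rw [← hBi' v]
      exact rel (Bi v)
    have h2 : Bi (A v) = ε • A (Bi v) := by
      rw [h1, LinearMap.map_smul, hBi]
    rw [h2, smul_smul, inv_mul_cancel₀ hε, one_smul]
  ext v
  simp only [Submodule.mem_map, Module.End.mem_eigenspace_iff]
  constructor
  · rintro ⟨w, hw, rfl⟩
    rw [rel, hw, LinearMap.map_smul, smul_smul]
  · intro hv
    refine ⟨Bi v, ?_, hBi' v⟩
    rw [relinv, hv, LinearMap.map_smul, smul_smul]
    congr 1
    field_simp

lemma pow_inj_of_orderOf {ε : ℂ} {p m n : ℕ} (hord : orderOf ε = p) (hε0 : ε ≠ 0)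
    (hm : m < p) (hn : n < p) (h : ε ^ m = ε ^ n) : m = n := by
  have key : ∀ m n : ℕ, m ≤ n → n < p → ε ^ m = ε ^ n → m = n := by
    intro m n hmn hnp he
    have : ε ^ m * ε ^ (n - m) = ε ^ m * 1 := by
      rw [mul_one, ← pow_add, Nat.add_sub_cancel' hmn, he]
    have h1 : ε ^ (n - m) = 1 := mul_left_cancel₀ (pow_ne_zero m hε0) this
    have h2 : p ∣ n - m := by rw [← hord]; exact orderOf_dvd_iff_pow_eq_one.mpr h1
    have h3 : n - m = 0 := Nat.eq_zero_of_dvd_of_lt h2 (lt_of_le_of_lt (Nat.sub_le n m) hnp) 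
    omega
  rcases le_total m n with hmn | hnm
  · exact key m n hmn hn h
  · exact (key n m hnm hm h.symm).symm

lemma eigenspace_eq_imp {V : Type} [AddCommGroup V] [Module ℂ V]
    (f : Module.End ℂ V) {a b : ℂ} (h : f.eigenspace a = f.eigenspace b)
    (hb : f.HasEigenvalue b) : a = b := by
  obtain ⟨v, hv⟩ := hb.exists_hasEigenvector
  have hva : v ∈ f.eigenspace a := h ▸ hv.1
  rw [Module.End.mem_eigenspace_iff] at hva
  have := hv.apply_eq_smul
  have heq : a • v = b • v := by rw [← hva, this]
  exact smul_left_injective ℂ hv.2 heq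

/-- For an odd prime `p`, a faithful irreducible `p`-dimensional complex
representation `ρ` of `H_p`, a non-central `g ∈ H_p` and `h ∈ H_p` with `φ(h) ∉ ⟨φ(g)⟩`
(`φ : H_p → A_p = H_p/Z(H_p)` the projection): `ρ(h)` maps each eigenspace of `ρ(g)` onto an
eigenspace of `ρ(g)`, no eigenline is fixed, and the induced permutation of the `p` eigenlines
is a single `p`-cycle; i.e. the powers of `h` act simply transitively on the eigenlines. -/
theorem Heisenberg_permutes_eigenlines (p : ℕ) (hp : p.Prime) (hodd : Odd p)
    (V : Type) [AddCommGroup V] [Module ℂ V] [FiniteDimensional ℂ V]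
    (ρ : Representation ℂ (Heisenberg p) V)
    (hirr : IsIrreducibleRep ρ) (hfaith : Function.Injective ρ)
    (hdim : Module.finrank ℂ V = p)
    (g h : Heisenberg p) (hg : g ∉ Subgroup.center (Heisenberg p))
    (hh : QuotientGroup.mk' (Subgroup.center (Heisenberg p)) h ∉
      Subgroup.zpowers (QuotientGroup.mk' (Subgroup.center (Heisenberg p)) g)) :
    (∀ μ : ℂ, Module.End.HasEigenvalue (ρ g) μ → ∃ μ' : ℂ,
        Module.End.HasEigenvalue (ρ g) μ' ∧
        Submodule.map (ρ h) (Module.End.eigenspace (ρ g) μ) =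
          Module.End.eigenspace (ρ g) μ') ∧
      (∀ μ : ℂ, Module.End.HasEigenvalue (ρ g) μ →
        Submodule.map (ρ h) (Module.End.eigenspace (ρ g) μ) ≠
          Module.End.eigenspace (ρ g) μ) ∧
      (∀ μ μ' : ℂ, Module.End.HasEigenvalue (ρ g) μ → Module.End.HasEigenvalue (ρ g) μ' →
        ∃! k : Fin p, Submodule.map (ρ (h ^ (k : ℕ))) (Module.End.eigenspace (ρ g) μ) =
          Module.End.eigenspace (ρ g) μ') := by
  haveI := hirr.1
  haveI : Fact p.Prime := ⟨hp⟩
  haveI : NeZero p := ⟨hp.pos.ne'⟩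
  haveI : Fact (1 < p) := ⟨hp.one_lt⟩
  have hp2 : 2 < p := by
    refine lt_of_le_of_ne hp.two_le ?_
    rintro rfl; exact absurd hodd (by decide)
  have hch : ((p.choose 2 : ℕ) : ZMod p) = 0 :=
    (ZMod.natCast_eq_zero_iff _ _).mpr (hp.dvd_choose_self (by norm_num) hp2)
  obtain ⟨ga, gb, gc, rfl⟩ := Heis_eq p g
  obtain ⟨ha, hb, hc, rfl⟩ := Heis_eq p h
  set g := HgS p ga gb gc with hgdef
  set h := HgS p ha hb hc with hhdef
  -- noncentrality of g
  have hgac : ¬(ga = 0 ∧ gc = 0) := by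
    rintro ⟨rfl, rfl⟩
    exact hg (HgS_central p gb)
  -- the key nonvanishing determinant
  set δ : ZMod p := ga * hc - ha * gc with hδdef
  have hδ : δ ≠ 0 := by
    intro h0
    apply hh
    have h0' : ga * hc - ha * gc = 0 := h0
    obtain ⟨t, hta, htc⟩ : ∃ t : ZMod p, t * ga = ha ∧ t * gc = hc := by
      by_cases hga : ga = 0
      · have hgc : gc ≠ 0 := fun hgc => hgac ⟨hga, hgc⟩
        rw [hga] at h0'
        have hha : ha = 0 := by
          have h2 : ha * gc = 0 := by linear_combination -h0'
          rcases mul_eq_zero.mp h2 with h1 | h1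
          · exact h1
          · exact absurd h1 hgc
        refine ⟨hc * gc⁻¹, by rw [hga, hha]; ring, ?_⟩
        field_simp
      · refine ⟨ha * ga⁻¹, by field_simp, ?_⟩
        field_simp
        linear_combination -h0'
    set n : ℕ := t.val with hndef
    have hncast : ((n : ℕ) : ZMod p) = t := ZMod.natCast_rightInverse t
    rw [Subgroup.mem_zpowers_iff]
    refine ⟨(n : ℤ), ?_⟩
    rw [zpow_natCast, ← _root_.map_pow]
    rw [QuotientGroup.mk'_eq_mk']
    refine ⟨(g ^ n)⁻¹ * h, ?_, by group⟩
    rw [hgdef, hhdef, HgS_pow, HgS_inv, HgS_mul]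
    have e1 : -(↑n * ga) + ha = 0 := by rw [hncast, hta]; ring
    have e3 : -(↑n * gc) + hc = 0 := by rw [hncast, htc]; ring
    rw [HgS_congr p e1 rfl e3]
    exact HgS_central p _
  -- Schur: the central element z acts as a scalar ω
  set z : Heisenberg p := HgS p 0 1 0 with hzdef
  obtain ⟨ω, hω⟩ := Module.End.exists_eigenvalue (ρ z)
  have hzscal : ∀ v : V, ρ z v = ω • v := by
    have hinv : ∀ x : Heisenberg p, ∀ v ∈ Module.End.eigenspace (ρ z) ω, ρ x v ∈ Module.End.eigenspace (ρ z) ω := by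
      intro x v hv
      rw [Module.End.mem_eigenspace_iff] at hv ⊢
      have hcomm : z * x = x * z := (Subgroup.mem_center_iff.mp (HgS_central p 1) x).symm
      calc ρ z (ρ x v) = ρ (z * x) v := by rw [_root_.map_mul]; rfl
        _ = ρ (x * z) v := by rw [hcomm]
        _ = ρ x (ρ z v) := by rw [_root_.map_mul]; rfl
        _ = ω • ρ x v := by rw [hv, LinearMap.map_smul]
    rcases hirr.2 _ hinv with hbot | htop
    · exact absurd hbot hω
    · intro v
      have : v ∈ Module.End.eigenspace (ρ z) ω := htop ▸ Submodule.mem_top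
      exact Module.End.mem_eigenspace_iff.mp this
  have hzpow : ∀ (n : ℕ) (v : V), ρ (z ^ n) v = ω ^ n • v := by
    intro n
    induction n with
    | zero => intro v; simp
    | succ n ih =>
        intro v
        rw [pow_succ, _root_.map_mul, Module.End.mul_apply, hzscal, LinearMap.map_smul, ih,
          smul_smul, ← pow_succ']
  obtain ⟨v₀, hv₀⟩ := exists_ne (0 : V)
  have hzp1 : z ^ p = 1 := by
    rw [hzdef, HgS_pow, ← HgS_one p]
    exact HgS_congr p (by ring) (by rw [ZMod.natCast_self]; ring) (by ring)
  have hωp : ω ^ p = 1 := by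
    have h1 : ρ (z ^ p) v₀ = ω ^ p • v₀ := hzpow p v₀
    rw [hzp1, _root_.map_one] at h1
    have : ω ^ p • v₀ = (1 : ℂ) • v₀ := by rw [one_smul]; exact h1.symm
    exact smul_left_injective ℂ hv₀ this
  have hω0 : ω ≠ 0 := by
    intro h0
    rw [h0, zero_pow hp.pos.ne'] at hωp
    exact zero_ne_one hωp
  have hω1 : ω ≠ 1 := by
    intro h1
    have hz1 : z = 1 := by
      apply hfaith
      apply LinearMap.ext
      intro v
      rw [hzscal, h1, one_smul, _root_.map_one, Module.End.one_apply]
    have hm : Hmat p 0 1 0 = 1 := congrArg (fun u : Heisenberg p =>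
      ((u : GL (Fin 3) (ZMod p)) : Matrix (Fin 3) (Fin 3) (ZMod p))) hz1
    have h10 : (1 : ZMod p) = 0 := by
      have := congrFun (congrFun hm 0) 2
      simpa [Hmat, Matrix.one_apply] using this
    exact one_ne_zero h10
  have hordω : orderOf ω = p := orderOf_eq_prime hωp hω1
  -- the primitive root ε
  set ε : ℂ := ω ^ δ.val with hεdef
  have hδval : δ.val ≠ 0 := fun h0 => hδ ((ZMod.val_eq_zero δ).mp h0)
  have hδvlt : δ.val < p := ZMod.val_lt δ
  have hε0 : ε ≠ 0 := pow_ne_zero _ hω0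
  have hεp : ε ^ p = 1 := by rw [hεdef, ← pow_mul, mul_comm, pow_mul, hωp, one_pow]
  have hε1 : ε ≠ 1 := by
    intro h1
    have h2 : orderOf ω ∣ δ.val := orderOf_dvd_iff_pow_eq_one.mpr h1
    rw [hordω] at h2
    exact hδval (Nat.eq_zero_of_dvd_of_lt h2 hδvlt)
  have hordε : orderOf ε = p := orderOf_eq_prime hεp hε1
  have hprim : IsPrimitiveRoot ε p := hordε ▸ IsPrimitiveRoot.orderOf ε
  -- the commutation relation
  have hzδ : z ^ δ.val = HgS p 0 δ 0 := by
    rw [hzdef, HgS_pow]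
    refine HgS_congr p (by ring) ?_ (by ring)
    rw [show ((δ.val : ℕ) : ZMod p) = δ from ZMod.natCast_rightInverse δ]; ring
  have hgh : g * h = z ^ δ.val * (h * g) := by
    rw [hzδ, hgdef, hhdef, HgS_mul, HgS_mul, HgS_mul]
    exact HgS_congr p (by ring) (by rw [hδdef]; ring) (by ring)
  have rel : ∀ v : V, ρ g (ρ h v) = ε • ρ h (ρ g v) := by
    intro v
    have : ρ (g * h) v = ρ (z ^ δ.val) (ρ (h * g) v) := by
      rw [hgh, _root_.map_mul, Module.End.mul_apply]
    rw [_root_.map_mul, Module.End.mul_apply] at this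
    rw [this, hzpow, _root_.map_mul, Module.End.mul_apply]
  have relk : ∀ (k : ℕ) (v : V), ρ g (ρ (h ^ k) v) = ε ^ k • ρ (h ^ k) (ρ g v) := by
    intro k
    induction k with
    | zero => intro v; simp
    | succ k ih =>
        intro v
        have h1 : ρ (h ^ (k+1)) = ρ h * ρ (h ^ k) := by rw [← _root_.map_mul, pow_succ']
        rw [h1, Module.End.mul_apply, rel, ih, LinearMap.map_smul, Module.End.mul_apply,
          smul_smul, pow_succ, mul_comm (ε ^ k) ε]
  -- mapping of eigenspaces
  have hinvk : ∀ (k : ℕ) (v : V), ρ ((h ^ k)⁻¹) (ρ (h ^ k) v) = v := by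
    intro k v
    rw [← Module.End.mul_apply, ← _root_.map_mul, inv_mul_cancel, _root_.map_one, Module.End.one_apply]
  have hinvk' : ∀ (k : ℕ) (v : V), ρ (h ^ k) (ρ ((h ^ k)⁻¹) v) = v := by
    intro k v
    rw [← Module.End.mul_apply, ← _root_.map_mul, mul_inv_cancel, _root_.map_one, Module.End.one_apply]
  have mapk : ∀ (k : ℕ) (μ : ℂ),
      Submodule.map (ρ (h ^ k)) (Module.End.eigenspace (ρ g) μ) = Module.End.eigenspace (ρ g) (ε ^ k * μ) :=
    fun k μ => map_eigenspace_of_comm (ρ g) (ρ (h ^ k)) (ρ ((h ^ k)⁻¹)) (hinvk k) (hinvk' k)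
      (ε ^ k) (pow_ne_zero _ hε0) (relk k) μ
  have map1 : ∀ μ : ℂ,
      Submodule.map (ρ h) (Module.End.eigenspace (ρ g) μ) = Module.End.eigenspace (ρ g) (ε * μ) := by
    intro μ
    have := mapk 1 μ
    rwa [pow_one, pow_one] at this
  -- eigenvalue facts
  have hρinj : ∀ (x : Heisenberg p) (v : V), ρ x v = 0 → v = 0 := by
    intro x v hxv
    have : ρ x⁻¹ (ρ x v) = v := by
      rw [← Module.End.mul_apply, ← _root_.map_mul, inv_mul_cancel, _root_.map_one, Module.End.one_apply]
    rw [hxv, _root_.map_zero] at this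
    exact this.symm
  have hμ0 : ∀ μ : ℂ, Module.End.HasEigenvalue (ρ g) μ → μ ≠ 0 := by
    intro μ hμ h0
    obtain ⟨v, hv⟩ := hμ.exists_hasEigenvector
    have := hv.apply_eq_smul
    rw [h0, zero_smul] at this
    exact hv.2 (hρinj g v this)
  have hgp1 : g ^ p = 1 := by
    rw [hgdef, HgS_pow, ← HgS_one p]
    exact HgS_congr p (by rw [ZMod.natCast_self]; ring)
      (by rw [ZMod.natCast_self, hch]; ring) (by rw [ZMod.natCast_self]; ring)
  have hμp : ∀ μ : ℂ, Module.End.HasEigenvalue (ρ g) μ → μ ^ p = 1 := by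
    intro μ hμ
    obtain ⟨v, hv⟩ := hμ.exists_hasEigenvector
    have hpowv : ∀ n : ℕ, ρ (g ^ n) v = μ ^ n • v := by
      intro n
      induction n with
      | zero => simp
      | succ n ih =>
          rw [pow_succ', _root_.map_mul, Module.End.mul_apply, ih, LinearMap.map_smul,
            hv.apply_eq_smul, smul_smul, pow_succ, mul_comm (μ ^ n) μ]
    have h1 := hpowv p
    rw [hgp1, _root_.map_one, Module.End.one_apply] at h1
    have : μ ^ p • v = (1 : ℂ) • v := by rw [one_smul]; exact h1.symm
    exact smul_left_injective ℂ hv.2 this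
  have hEig : ∀ (η μ : ℂ), η ≠ 0 → Module.End.HasEigenvalue (ρ g) μ → Module.End.HasEigenvalue (ρ g) (η * μ) →
      True := fun _ _ _ _ _ => trivial
  refine ⟨?_, ?_, ?_⟩
  · -- part 1
    intro μ hμ
    refine ⟨ε * μ, ?_, map1 μ⟩
    obtain ⟨v, hv⟩ := hμ.exists_hasEigenvector
    have hmem : ρ h v ∈ Module.End.eigenspace (ρ g) (ε * μ) := by
      rw [← map1 μ]
      exact Submodule.mem_map_of_mem hv.1
    have hne : ρ h v ≠ 0 := fun h0 => hv.2 (hρinj h v h0)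
    exact Module.End.hasEigenvalue_of_hasEigenvector ⟨hmem, hne⟩
  · -- part 2
    intro μ hμ heq
    rw [map1 μ] at heq
    have hem := eigenspace_eq_imp (ρ g) heq hμ
    have hμne := hμ0 μ hμ
    exact hε1 (mul_right_cancel₀ hμne (hem.trans (one_mul μ).symm))
  · -- part 3
    intro μ μ' hμ hμ'
    have hμne := hμ0 μ hμ
    have hrp : (μ' * μ⁻¹) ^ p = 1 := by
      rw [mul_pow, hμp μ' hμ', inv_pow, hμp μ hμ, inv_one, mul_one]
    obtain ⟨i, hip, hie⟩ := hprim.eq_pow_of_pow_eq_one hrp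
    have hiμ : ε ^ i * μ = μ' := by
      rw [hie]
      field_simp
    refine ⟨⟨i, hip⟩, ?_, ?_⟩
    · show Submodule.map (ρ (h ^ i)) _ = _
      rw [mapk i μ, hiμ]
    · intro k' hk'
      have hk'e : Submodule.map (ρ (h ^ (k' : ℕ))) (Module.End.eigenspace (ρ g) μ) =
          Module.End.eigenspace (ρ g) μ' := hk'
      rw [mapk (k' : ℕ) μ] at hk'e
      have he1 : ε ^ (k' : ℕ) * μ = μ' := eigenspace_eq_imp (ρ g) hk'e hμ'
      have he2 : ε ^ (k' : ℕ) = ε ^ i := by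
        have : ε ^ (k' : ℕ) * μ = ε ^ i * μ := by rw [he1, hiμ]
        exact mul_right_cancel₀ hμne this
      exact Fin.ext (pow_inj_of_orderOf hordε hε0 k'.2 hip he2)
end

section
/- Let p be an odd prime and let H_p be the discrete Heisenberg group. If a class c ∈ H²(H_p; ℚ/ℤ) (group cohomology with coefficients in the trivial H_p-module ℚ/ℤ) restricts to zero in H²(A; ℚ/ℤ) for every abelian subgroup A of H_p, then c = 0. (Equivalently, the Bogomolov multiplier B₀(H_p), defined as the intersection over all abelian subgroups A ≤ H_p of the kernels of the restriction maps H²(H_p; ℚ/ℤ) → H²(A; ℚ/ℤ), is zero.) -/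
open Matrix

/-- `ℚ/ℤ` as an additive group. -/
abbrev QmodZ : Type := ℚ ⧸ AddSubgroup.zmultiples (1 : ℚ)

/-- A 2-cocycle of a group `G` with coefficients in a trivial `G`-module `M`. -/
def IsTwoCocycle {G M : Type*} [Group G] [AddCommGroup M] (f : G → G → M) : Prop :=
  ∀ g h k : G, f g h + f (g * h) k = f h k + f g (h * k)

/-- A 2-coboundary of a group `G` with coefficients in a trivial `G`-module `M`;
for a 2-cocycle `f`, being a coboundary means that the class of `f` in `H²(G; M)` is zero. -/
def IsTwoCoboundary {G M : Type*} [Group G] [AddCommGroup M] (f : G → G → M) : Prop :=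
  ∃ φ : G → M, ∀ g h : G, f g h = φ g + φ h - φ (g * h)

/-! A 2-cocycle `f` on `G` is a coboundary iff the central extension `E_f = G × ℚ/ℤ` it defines
splits. If `f` restricts to coboundaries on abelian subgroups, then `f` is symmetric on commuting
pairs, so any two elements of `E_f` with commuting images commute. By divisibility of `ℚ/ℤ`, the
generators `X`, `Y` of `H_p` have lifts `x`, `y` of order dividing `p`; their commutator lies over
the central element `Z` and is therefore central in `E_f`. Then `M(a,b,c) ↦ ⁅x,y⁆ᵇ yᶜ xᵃ` is a
homomorphic section of `E_f → H_p`, exactly as `M(a,b,c) = Zᵇ Yᶜ Xᵃ` in `H_p`. -/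

open scoped commutatorElement

section Cocycles

variable {G M : Type*} [Group G] [AddCommGroup M] {f : G → G → M}

namespace IsTwoCocycle

lemma apply_right_one (hf : IsTwoCocycle f) (g : G) : f g 1 = f 1 1 := by
  have h := hf g 1 1
  simp only [mul_one] at h
  exact add_right_cancel h

lemma apply_one_left (hf : IsTwoCocycle f) (g : G) : f 1 g = f 1 1 := by
  have h := hf 1 1 g
  simp only [one_mul] at h
  exact (add_left_cancel ((add_comm _ _).trans h)).symm

lemma apply_inv_self (hf : IsTwoCocycle f) (g : G) : f g g⁻¹ = f g⁻¹ g := by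
  have h := hf g g⁻¹ g
  rw [mul_inv_cancel, inv_mul_cancel, hf.apply_right_one, hf.apply_one_left] at h
  exact add_right_cancel h

end IsTwoCocycle

lemma IsTwoCoboundary.apply_comm (hf : IsTwoCoboundary f) {g h : G} (hgh : Commute g h) :
    f g h = f h g := by
  obtain ⟨φ, hφ⟩ := hf
  rw [hφ, hφ, hgh, add_comm (φ g)]

lemma apply_comm_of_forall_isTwoCoboundary_restrict
    (hres : ∀ A : Subgroup G, (∀ x ∈ A, ∀ y ∈ A, x * y = y * x) →
      IsTwoCoboundary (fun a b : A => f a b))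
    {g h : G} (hgh : Commute g h) : f g h = f h g := by
  have hcomm : ∀ x ∈ ({g, h} : Set G), ∀ y ∈ ({g, h} : Set G), x * y = y * x := by
    rintro x (rfl | rfl) y (rfl | rfl) <;> first | rfl | exact hgh | exact hgh.symm
  have hA := (Subgroup.isMulCommutative_closure hcomm).is_comm.comm
  have hg : g ∈ Subgroup.closure {g, h} := Subgroup.subset_closure (by simp)
  have hh : h ∈ Subgroup.closure {g, h} := Subgroup.subset_closure (by simp)
  exact (hres _ fun x hx y hy => congrArg Subtype.val (hA ⟨x, hx⟩ ⟨y, hy⟩)).apply_comm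
    (g := ⟨g, hg⟩) (h := ⟨h, hh⟩) (Subtype.ext hgh)

end Cocycles

-- `hf` is a parameter of the type only so that the group law below can use the cocycle identity.
@[ext]
structure CocycleExtension {G M : Type*} [Group G] [AddCommGroup M] (f : G → G → M)
    (hf : IsTwoCocycle f) where
  base : G
  fiber : M

namespace CocycleExtension

variable {G M : Type*} [Group G] [AddCommGroup M] {f : G → G → M} {hf : IsTwoCocycle f}

instance : Group (CocycleExtension f hf) where
  mul x y := ⟨x.base * y.base, x.fiber + y.fiber + f x.base y.base⟩
  one := ⟨1, -f 1 1⟩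
  inv x := ⟨x.base⁻¹, -x.fiber - f x.base x.base⁻¹ - f 1 1⟩
  mul_assoc x y z := by
    refine CocycleExtension.ext (mul_assoc _ _ _) ?_
    change x.fiber + y.fiber + f x.base y.base + z.fiber + f (x.base * y.base) z.base
      = x.fiber + (y.fiber + z.fiber + f y.base z.base) + f x.base (y.base * z.base)
    linear_combination (norm := abel) hf x.base y.base z.base
  one_mul x := by
    refine CocycleExtension.ext (one_mul _) ?_
    change -f 1 1 + x.fiber + f 1 x.base = x.fiber
    rw [hf.apply_one_left x.base]; abel
  mul_one x := by
    refine CocycleExtension.ext (mul_one _) ?_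
    change x.fiber + -f 1 1 + f x.base 1 = x.fiber
    rw [hf.apply_right_one x.base]; abel
  inv_mul_cancel x := by
    refine CocycleExtension.ext (inv_mul_cancel _) ?_
    change -x.fiber - f x.base x.base⁻¹ - f 1 1 + x.fiber + f x.base⁻¹ x.base = -f 1 1
    rw [← hf.apply_inv_self]; abel

@[simp] lemma fiber_mul (x y : CocycleExtension f hf) :
    (x * y).fiber = x.fiber + y.fiber + f x.base y.base := rfl

def toBase : CocycleExtension f hf →* G where
  toFun := base
  map_one' := rfl
  map_mul' _ _ := rfl

@[simp] lemma toBase_apply (x : CocycleExtension f hf) : toBase x = x.base := rfl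

@[simp] lemma base_pow (x : CocycleExtension f hf) (n : ℕ) : (x ^ n).base = x.base ^ n :=
  map_pow toBase x n

lemma commute_of_commute_base (hsymm : ∀ g h : G, Commute g h → f g h = f h g)
    {x y : CocycleExtension f hf} (h : Commute x.base y.base) : Commute x y := by
  refine CocycleExtension.ext h ?_
  change x.fiber + y.fiber + f x.base y.base = y.fiber + x.fiber + f y.base x.base
  rw [hsymm _ _ h, add_comm x.fiber]

variable (f hf) in
def ofFiber (v : M) : CocycleExtension f hf := ⟨1, v - f 1 1⟩

lemma ofFiber_add (v w : M) : ofFiber f hf v * ofFiber f hf w = ofFiber f hf (v + w) := by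
  refine CocycleExtension.ext (one_mul 1) ?_
  change v - f 1 1 + (w - f 1 1) + f 1 1 = v + w - f 1 1
  abel

lemma ofFiber_zero : ofFiber f hf 0 = 1 :=
  CocycleExtension.ext rfl (zero_sub _)

lemma ofFiber_pow (v : M) (n : ℕ) : ofFiber f hf v ^ n = ofFiber f hf (n • v) := by
  induction n with
  | zero => rw [pow_zero, zero_smul, ofFiber_zero]
  | succ n ih => rw [pow_succ, ih, ofFiber_add, succ_nsmul]

lemma commute_ofFiber (v : M) (x : CocycleExtension f hf) : Commute (ofFiber f hf v) x := by
  refine CocycleExtension.ext ((one_mul _).trans (mul_one _).symm) ?_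
  change v - f 1 1 + x.fiber + f 1 x.base = x.fiber + (v - f 1 1) + f x.base 1
  rw [hf.apply_one_left x.base, hf.apply_right_one x.base]; abel

lemma eq_ofFiber_of_base_eq_one {x : CocycleExtension f hf} (h : x.base = 1) :
    x = ofFiber f hf (x.fiber + f 1 1) :=
  CocycleExtension.ext h (add_sub_cancel_right _ _).symm

lemma exists_base_eq_and_pow_eq_one [DivisibleBy M ℤ] {n : ℕ} (hn : n ≠ 0) {g : G}
    (hg : g ^ n = 1) : ∃ x : CocycleExtension f hf, x.base = g ∧ x ^ n = 1 := by
  let x₀ : CocycleExtension f hf := ⟨g, 0⟩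
  obtain ⟨w, hw⟩ : ∃ w, x₀ ^ n = ofFiber f hf w :=
    ⟨_, eq_ofFiber_of_base_eq_one (by rw [base_pow, hg])⟩
  let v := DivisibleBy.div (-w) (n : ℤ)
  have hv : n • v = -w := by
    rw [← natCast_zsmul]; exact DivisibleBy.div_cancel _ (Int.natCast_ne_zero.2 hn)
  refine ⟨x₀ * ofFiber f hf v, mul_one g, ?_⟩
  rw [((commute_ofFiber v x₀).symm).mul_pow, hw, ofFiber_pow, hv, ofFiber_add, add_neg_cancel,
    ofFiber_zero]

lemma isTwoCoboundary_of_section (s : G →* CocycleExtension f hf) (hs : ∀ g, (s g).base = g) :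
    IsTwoCoboundary f := by
  refine ⟨fun g => -(s g).fiber, fun g h => ?_⟩
  have hfiber := congrArg fiber (map_mul s g h)
  rw [fiber_mul, hs, hs] at hfiber
  change f g h = -(s g).fiber + -(s h).fiber - -(s (g * h)).fiber
  rw [hfiber]; abel

end CocycleExtension

section CentralCommutator

variable {K : Type*} [Group K] {x y : K}

lemma pow_eq_pow_of_natCast_eq {p : ℕ} (hx : x ^ p = 1) {m n : ℕ}
    (h : (m : ZMod p) = n) : x ^ m = x ^ n :=
  pow_eq_pow_iff_modEq.2 (((ZMod.natCast_eq_natCast_iff m n p).1 h).of_dvd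
    (orderOf_dvd_of_pow_eq_one hx))

lemma mul_eq_commutatorElement_mul_mul : x * y = ⁅x, y⁆ * (y * x) := by
  rw [commutatorElement_def]; group

lemma pow_mul_pow_eq_commutatorElement_pow_mul (hz : ∀ w, Commute ⁅x, y⁆ w) (a c : ℕ) :
    x ^ a * y ^ c = ⁅x, y⁆ ^ (a * c) * (y ^ c * x ^ a) := by
  have hxyc : x * y ^ c = ⁅x, y⁆ ^ c * (y ^ c * x) := by
    have h : SemiconjBy x y (⁅x, y⁆ * y) := by
      rw [SemiconjBy, mul_eq_commutatorElement_mul_mul, mul_assoc]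
    rw [(h.pow_right c).eq, (hz y).mul_pow, mul_assoc]
  induction a with
  | zero => simp
  | succ a ih =>
    calc x ^ (a + 1) * y ^ c = x ^ a * (x * y ^ c) := by rw [pow_succ, mul_assoc]
      _ = ⁅x, y⁆ ^ c * (x ^ a * y ^ c * x) := by
        rw [hxyc, ((hz _).pow_left c).symm.left_comm, mul_assoc]
      _ = ⁅x, y⁆ ^ ((a + 1) * c) * (y ^ c * x ^ (a + 1)) := by
        rw [ih, add_one_mul, add_comm, pow_add, pow_succ]; simp only [mul_assoc]

lemma commutatorElement_pow_mul_pow_mul_pow_mul (hz : ∀ w, Commute ⁅x, y⁆ w) (a b c a' b' c' : ℕ) :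
    ⁅x, y⁆ ^ b * y ^ c * x ^ a * (⁅x, y⁆ ^ b' * y ^ c' * x ^ a') =
      ⁅x, y⁆ ^ (b + b' + a * c') * y ^ (c + c') * x ^ (a + a') :=
  calc ⁅x, y⁆ ^ b * y ^ c * x ^ a * (⁅x, y⁆ ^ b' * y ^ c' * x ^ a')
      = ⁅x, y⁆ ^ b * ⁅x, y⁆ ^ b' * y ^ c * (x ^ a * y ^ c') * x ^ a' := by
        simp only [mul_assoc, ((hz _).pow_left b').symm.left_comm]
    _ = ⁅x, y⁆ ^ (b + b' + a * c') * y ^ (c + c') * x ^ (a + a') := by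
        rw [pow_mul_pow_eq_commutatorElement_pow_mul hz]
        simp only [mul_assoc, ((hz _).pow_left (a * c')).symm.left_comm, pow_add]

end CentralCommutator

namespace Heisenberg

variable {p : ℕ}

variable (p) in
def mk (a b c : ZMod p) : Heisenberg p := ⟨Hgl p a b c, a, b, c, rfl⟩

def a (g : Heisenberg p) : ZMod p :=
  ((g : GL (Fin 3) (ZMod p)) : Matrix (Fin 3) (Fin 3) (ZMod p)) 0 1

def b (g : Heisenberg p) : ZMod p :=
  ((g : GL (Fin 3) (ZMod p)) : Matrix (Fin 3) (Fin 3) (ZMod p)) 0 2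

def c (g : Heisenberg p) : ZMod p :=
  ((g : GL (Fin 3) (ZMod p)) : Matrix (Fin 3) (Fin 3) (ZMod p)) 1 2

@[simp] lemma a_mk (a₀ b₀ c₀ : ZMod p) : a (mk p a₀ b₀ c₀) = a₀ := by simp [a, mk, Hgl, Hmat]

@[simp] lemma b_mk (a₀ b₀ c₀ : ZMod p) : b (mk p a₀ b₀ c₀) = b₀ := by simp [b, mk, Hgl, Hmat]

@[simp] lemma c_mk (a₀ b₀ c₀ : ZMod p) : c (mk p a₀ b₀ c₀) = c₀ := by simp [c, mk, Hgl, Hmat]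

lemma exists_eq_mk (g : Heisenberg p) : ∃ a₀ b₀ c₀, g = mk p a₀ b₀ c₀ :=
  let ⟨a₀, b₀, c₀, h⟩ := g.2
  ⟨a₀, b₀, c₀, Subtype.ext h⟩

lemma mk_a_b_c (g : Heisenberg p) : mk p (a g) (b g) (c g) = g := by
  obtain ⟨a₀, b₀, c₀, rfl⟩ := exists_eq_mk g
  simp

lemma mk_mul (a₀ b₀ c₀ a₁ b₁ c₁ : ZMod p) :
    mk p a₀ b₀ c₀ * mk p a₁ b₁ c₁ = mk p (a₀ + a₁) (b₀ + b₁ + a₀ * c₁) (c₀ + c₁) :=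
  Subtype.ext (Hgl_mul p a₀ b₀ c₀ a₁ b₁ c₁)

lemma mk_zero : mk p 0 0 0 = 1 :=
  Subtype.ext (Units.ext (Hmat_one p))

lemma a_mul (g h : Heisenberg p) : a (g * h) = a g + a h := by
  obtain ⟨a₀, b₀, c₀, rfl⟩ := exists_eq_mk g
  obtain ⟨a₁, b₁, c₁, rfl⟩ := exists_eq_mk h
  simp [mk_mul]

lemma b_mul (g h : Heisenberg p) : b (g * h) = b g + b h + a g * c h := by
  obtain ⟨a₀, b₀, c₀, rfl⟩ := exists_eq_mk g
  obtain ⟨a₁, b₁, c₁, rfl⟩ := exists_eq_mk h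
  simp [mk_mul]

lemma c_mul (g h : Heisenberg p) : c (g * h) = c g + c h := by
  obtain ⟨a₀, b₀, c₀, rfl⟩ := exists_eq_mk g
  obtain ⟨a₁, b₁, c₁, rfl⟩ := exists_eq_mk h
  simp [mk_mul]

lemma X_pow (n : ℕ) : He.X p ^ n = mk p n 0 0 := by
  induction n with
  | zero => simp [mk_zero]
  | succ n ih => rw [pow_succ, ih, He.X, ← mk, mk_mul]; simp

lemma Y_pow (n : ℕ) : He.Y p ^ n = mk p 0 0 n := by
  induction n with
  | zero => simp [mk_zero]
  | succ n ih => rw [pow_succ, ih, He.Y, ← mk, mk_mul]; simp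

lemma Z_pow (n : ℕ) : He.Z p ^ n = mk p 0 n 0 := by
  induction n with
  | zero => simp [mk_zero]
  | succ n ih => rw [pow_succ, ih, He.Z, ← mk, mk_mul]; simp

variable (p) in
lemma X_pow_self : He.X p ^ p = 1 := by
  rw [X_pow, ZMod.natCast_self, mk_zero]

variable (p) in
lemma Y_pow_self : He.Y p ^ p = 1 := by
  rw [Y_pow, ZMod.natCast_self, mk_zero]

lemma commute_Z (g : Heisenberg p) : Commute (He.Z p) g := by
  obtain ⟨a₀, b₀, c₀, rfl⟩ := exists_eq_mk g
  change mk p 0 1 0 * _ = _ * mk p 0 1 0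
  rw [mk_mul, mk_mul]
  congr 1 <;> ring

variable (p) in
lemma commutatorElement_X_Y : ⁅He.X p, He.Y p⁆ = He.Z p := by
  rw [commutatorElement_def, mul_inv_eq_iff_eq_mul, mul_inv_eq_iff_eq_mul]
  change mk p 1 0 0 * mk p 0 0 1 = mk p 0 1 0 * mk p 0 0 1 * mk p 1 0 0
  simp only [mk_mul]
  congr 1 <;> ring

lemma Z_pow_mul_Y_pow_mul_X_pow [NeZero p] (g : Heisenberg p) :
    He.Z p ^ (b g).val * He.Y p ^ (c g).val * He.X p ^ (a g).val = g := by
  simp only [X_pow, Y_pow, Z_pow, mk_mul, ZMod.natCast_zmod_val]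
  simpa using mk_a_b_c g

variable {K : Type*} [Group K]

def liftFun (x y : K) (g : Heisenberg p) : K := ⁅x, y⁆ ^ (b g).val * y ^ (c g).val * x ^ (a g).val

lemma map_liftFun {K' : Type*} [Group K'] (φ : K →* K') (x y : K) (g : Heisenberg p) :
    φ (liftFun x y g) = liftFun (φ x) (φ y) g := by
  simp only [liftFun, map_mul, map_pow, map_commutatorElement]

lemma liftFun_X_Y [NeZero p] (g : Heisenberg p) : liftFun (He.X p) (He.Y p) g = g := by
  rw [liftFun, commutatorElement_X_Y, Z_pow_mul_Y_pow_mul_X_pow]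

lemma liftFun_mul [NeZero p] {x y : K} (hx : x ^ p = 1) (hy : y ^ p = 1)
    (hz : ∀ w, Commute ⁅x, y⁆ w) (g h : Heisenberg p) :
    liftFun x y (g * h) = liftFun x y g * liftFun x y h := by
  have hzp : ⁅x, y⁆ ^ p = 1 := by
    simpa [hy] using pow_mul_pow_eq_commutatorElement_pow_mul hz 1 p
  have ha : ((a (g * h)).val : ZMod p) = ((a g).val + (a h).val : ℕ) := by simp [a_mul]
  have hb : ((b (g * h)).val : ZMod p) = ((b g).val + (b h).val + (a g).val * (c h).val : ℕ) := by
    simp [b_mul]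
  have hc : ((c (g * h)).val : ZMod p) = ((c g).val + (c h).val : ℕ) := by simp [c_mul]
  rw [liftFun, pow_eq_pow_of_natCast_eq hx ha, pow_eq_pow_of_natCast_eq hzp hb,
    pow_eq_pow_of_natCast_eq hy hc, liftFun, liftFun,
    commutatorElement_pow_mul_pow_mul_pow_mul hz]

def lift [NeZero p] {x y : K} (hx : x ^ p = 1) (hy : y ^ p = 1) (hz : ∀ w, Commute ⁅x, y⁆ w) :
    Heisenberg p →* K :=
  MonoidHom.mk' (liftFun x y) (liftFun_mul hx hy hz)

end Heisenberg

open Heisenberg CocycleExtension in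
theorem Bogomolov_multiplier_Heisenberg_trivial_general (p : ℕ) (hp : p.Prime)
    (f : Heisenberg p → Heisenberg p → QmodZ) (hf : IsTwoCocycle f)
    (hres : ∀ A : Subgroup (Heisenberg p), (∀ x ∈ A, ∀ y ∈ A, x * y = y * x) →
      IsTwoCoboundary (fun a b : A => f a b)) :
    IsTwoCoboundary f := by
  have : NeZero p := ⟨hp.ne_zero⟩
  have hsymm : ∀ g h, Commute g h → f g h = f h g := fun _ _ =>
    apply_comm_of_forall_isTwoCoboundary_restrict hres
  obtain ⟨x, hxX, hx⟩ := exists_base_eq_and_pow_eq_one (hf := hf) hp.ne_zero (X_pow_self p)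
  obtain ⟨y, hyY, hy⟩ := exists_base_eq_and_pow_eq_one (hf := hf) hp.ne_zero (Y_pow_self p)
  have hbase (g : Heisenberg p) : (liftFun x y g).base = g := by
    rw [← toBase_apply, map_liftFun, toBase_apply, toBase_apply, hxX, hyY, liftFun_X_Y]
  have hz (w : CocycleExtension f hf) : Commute ⁅x, y⁆ w := by
    refine commute_of_commute_base hsymm ?_
    rw [← toBase_apply, map_commutatorElement, toBase_apply, toBase_apply, hxX, hyY,
      commutatorElement_X_Y]
    exact commute_Z _
  exact isTwoCoboundary_of_section (lift hx hy hz) hbase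

/-- For an odd prime `p`, if a class `c ∈ H²(H_p; ℚ/ℤ)` restricts to zero in
`H²(A; ℚ/ℤ)` for every abelian subgroup `A ≤ H_p`, then `c = 0`; i.e. the Bogomolov multiplier
`B₀(H_p)`, the intersection of the kernels of all restrictions to abelian subgroups, is zero.
(Classes in `H²` with trivial coefficients are represented by 2-cocycles, restriction is
restriction of cocycles, and a class is zero iff a representing cocycle is a coboundary.) -/
theorem Bogomolov_multiplier_Heisenberg_trivial (p : ℕ) (hp : p.Prime) (hodd : Odd p)
    (f : Heisenberg p → Heisenberg p → QmodZ) (hf : IsTwoCocycle f)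
    (hres : ∀ A : Subgroup (Heisenberg p), (∀ x ∈ A, ∀ y ∈ A, x * y = y * x) →
      IsTwoCoboundary (fun a b : A => f a b)) :
    IsTwoCoboundary f :=
  Bogomolov_multiplier_Heisenberg_trivial_general p hp f hf hres
end
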